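/- Let S : [0,1] × {0,1} → ℝ be a strictly proper scoring rule that is L-Lipschitz in its first argument, let m ≥ 1 be a natural number, and let q ∈ [0,1]. Let 𝒮^m_approach = {(x, z) ∈ ℝ^{m+1} × ℝ : ‖x‖₁ ≤ 1/m and z ≤ 4L/m²}, and let a ∈ ℝ^{m+1}, b ∈ ℝ, θ ∈ ℝ be such that the halfspace H = {(x, z) : ⟨a, x⟩ + b·z ≤ θ} contains 𝒮^m_approach. Then there exists a probability vector w ∈ Δ_{m+1} such that for every y ∈ {0,1}: ∑_{i=0}^{m} a_i · w_i · (y − i/m) + b · ∑_{i=0}^{m} w_i · (S(i/m, y) − S(q, y)) ≤ θ. -/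

import Mathlib

/-!
Write `g i y` for the payoff of the pure forecast `i/m` against outcome `y`. The halfspace
contains `𝒮^m_approach`, which forces `b ≥ 0` and `|a i|/m + b·4L/m² ≤ θ`. Properness and the
Lipschitz bound give `S̄(x, t) − S̄(t, t) ≤ 2L(x − t)²`, so the `t`-expected payoff of every grid
point within `1/m` of `t` is at most `θ`. Hence `g 0 0 ≤ θ`, `g m 1 ≤ θ`, and the consecutive grid
points `k, k+1` both have expected payoff at most `θ` at `t = k/m`. If `g 0 0 > g 0 1` or
`g m 0 ≤ g m 1` a pure forecast works; otherwise `g · 0 − g · 1` changes sign between some `k`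
and `k+1`, and the mixture of these two forecasts equalizing both outcomes works.
-/

/-- The affine extension of a scoring rule `S : [0,1] × {0,1} → ℝ` to
`S̄(x, p) = (1−p)·S(x,0) + p·S(x,1)`. -/
noncomputable def Sbar (S : ℝ → Fin 2 → ℝ) (x p : ℝ) : ℝ :=
  (1 - p) * S x 0 + p * S x 1

/-- A scoring rule is strictly proper if truthfully reporting uniquely minimizes
the expected score. -/
def StrictlyProperScoringRule (S : ℝ → Fin 2 → ℝ) : Prop :=
  ∀ p ∈ Set.Icc (0:ℝ) 1, ∀ x ∈ Set.Icc (0:ℝ) 1,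
    Sbar S p p ≤ Sbar S x p ∧ (x ≠ p → Sbar S p p < Sbar S x p)

/-- `S` is `L`-Lipschitz in its first argument on `[0,1]`. -/
def LipschitzScoringRule (S : ℝ → Fin 2 → ℝ) (L : ℝ) : Prop :=
  ∀ x ∈ Set.Icc (0:ℝ) 1, ∀ x' ∈ Set.Icc (0:ℝ) 1, ∀ y : Fin 2,
    |S x y - S x' y| ≤ L * |x - x'|

open Finset Set

def ProperScoringRule (S : ℝ → Fin 2 → ℝ) : Prop :=
  ∀ p ∈ Icc (0:ℝ) 1, ∀ x ∈ Icc (0:ℝ) 1, Sbar S p p ≤ Sbar S x p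

theorem StrictlyProperScoringRule.proper {S : ℝ → Fin 2 → ℝ}
    (hS : StrictlyProperScoringRule S) : ProperScoringRule S :=
  fun p hp x hx => (hS p hp x hx).1

theorem LipschitzScoringRule.nonneg {S : ℝ → Fin 2 → ℝ} {L : ℝ}
    (hlip : LipschitzScoringRule S L) : 0 ≤ L := by
  have h := hlip 1 (by simp) 0 (by simp) 0
  norm_num at h
  exact (abs_nonneg _).trans h

theorem LipschitzScoringRule.abs_mul_sub_le {S : ℝ → Fin 2 → ℝ} {L : ℝ}
    (hlip : LipschitzScoringRule S L) {x t : ℝ} (hx : x ∈ Icc (0:ℝ) 1)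
    (ht : t ∈ Icc (0:ℝ) 1) (y : Fin 2) :
    |(x - t) * (S x y - S t y)| ≤ L * (x - t) ^ 2 := by
  rw [abs_mul, ← sq_abs, sq, mul_left_comm]
  exact mul_le_mul_of_nonneg_left (hlip x hx t ht y) (abs_nonneg _)

/-- Subtracting the properness inequality at `x` leaves only the cross terms
`(x − t)(S x y − S t y)`, which the Lipschitz bound controls. -/
theorem sbar_sub_sbar_self_le {S : ℝ → Fin 2 → ℝ} {L : ℝ}
    (hS : ProperScoringRule S) (hlip : LipschitzScoringRule S L)
    {x t : ℝ} (hx : x ∈ Icc (0:ℝ) 1) (ht : t ∈ Icc (0:ℝ) 1) :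
    Sbar S x t - Sbar S t t ≤ 2 * L * (x - t) ^ 2 := by
  have hprop := hS x hx t ht
  have h0 := (abs_le.1 (hlip.abs_mul_sub_le hx ht 0)).2
  have h1 := (abs_le.1 (hlip.abs_mul_sub_le hx ht 1)).1
  simp only [Sbar] at hprop ⊢
  linarith

noncomputable def payoff (S : ℝ → Fin 2 → ℝ) (q α b x : ℝ) (y : Fin 2) : ℝ :=
  α * ((y : ℕ) - x) + b * (S x y - S q y)

theorem sum_mul_add_mul_sum_eq_sum_payoff {ι : Type*} [Fintype ι] (S : ℝ → Fin 2 → ℝ)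
    (q b : ℝ) (a w x : ι → ℝ) (y : Fin 2) :
    (∑ k, a k * w k * ((y : ℕ) - x k)) + b * ∑ k, w k * (S (x k) y - S q y)
      = ∑ k, w k * payoff S q (a k) b (x k) y := by
  simp only [payoff, mul_sum, ← sum_add_distrib]
  exact sum_congr rfl fun k _ => by ring

theorem expected_payoff_le {S : ℝ → Fin 2 → ℝ} {L q α b x t δ : ℝ}
    (hS : ProperScoringRule S) (hlip : LipschitzScoringRule S L) (hq : q ∈ Icc (0:ℝ) 1)
    (hb : 0 ≤ b) (hx : x ∈ Icc (0:ℝ) 1) (ht : t ∈ Icc (0:ℝ) 1) (hδ : |t - x| ≤ δ) :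
    (1 - t) * payoff S q α b x 0 + t * payoff S q α b x 1
      ≤ |α| * δ + b * (2 * L * δ ^ 2) := by
  have hexp : (1 - t) * payoff S q α b x 0 + t * payoff S q α b x 1
      = α * (t - x) + b * (Sbar S x t - Sbar S q t) := by
    simp only [payoff, Sbar, Fin.val_zero, Fin.val_one, Nat.cast_zero, Nat.cast_one]
    ring
  have hlin : α * (t - x) ≤ |α| * δ := calc
    α * (t - x) ≤ |α| * |t - x| := (le_abs_self _).trans (abs_mul _ _).le
    _ ≤ |α| * δ := mul_le_mul_of_nonneg_left hδ (abs_nonneg _)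
  have hsq : (x - t) ^ 2 ≤ δ ^ 2 := by
    rw [← sq_abs, abs_sub_comm]
    exact pow_le_pow_left₀ (abs_nonneg _) hδ 2
  have hdiv : Sbar S x t - Sbar S q t ≤ 2 * L * δ ^ 2 := calc
    Sbar S x t - Sbar S q t ≤ Sbar S x t - Sbar S t t := by linarith [hS t ht q hq]
    _ ≤ 2 * L * (x - t) ^ 2 := sbar_sub_sbar_self_le hS hlip hx ht
    _ ≤ 2 * L * δ ^ 2 := by have := hlip.nonneg; gcongr
  rw [hexp]
  gcongr

section Halfspace

variable {ι : Type*} [Fintype ι] {a : ι → ℝ} {b θ r c : ℝ}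

theorem nonneg_of_subset_halfspace (hr : 0 ≤ r)
    (hH : {p : (ι → ℝ) × ℝ | (∑ i, |p.1 i|) ≤ r ∧ p.2 ≤ c} ⊆
      {p : (ι → ℝ) × ℝ | (∑ i, a i * p.1 i) + b * p.2 ≤ θ}) : 0 ≤ b := by
  by_contra! hb
  have hz : min c ((θ + 1) / b) ≤ (θ + 1) / b := min_le_right _ _
  have hmem := hH (a := (0, min c ((θ + 1) / b))) ⟨by simpa using hr, min_le_left _ _⟩
  have : θ + 1 ≤ b * min c ((θ + 1) / b) := by
    simpa [mul_div_cancel₀ _ hb.ne] using mul_le_mul_of_nonpos_left hz hb.le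
  simp only [mem_ofPred_eq, Pi.zero_apply, mul_zero, sum_const_zero, zero_add] at hmem
  linarith

theorem abs_mul_add_le_of_subset_halfspace [DecidableEq ι] (hr : 0 ≤ r)
    (hH : {p : (ι → ℝ) × ℝ | (∑ i, |p.1 i|) ≤ r ∧ p.2 ≤ c} ⊆
      {p : (ι → ℝ) × ℝ | (∑ i, a i * p.1 i) + b * p.2 ≤ θ}) (i : ι) :
    |a i| * r + b * c ≤ θ := by
  have hsingle : ∀ s : ℝ, |s| = r → a i * s + b * c ≤ θ := fun s hs => by
    simpa [Pi.single_apply, apply_ite, hs] using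
      hH (a := (Pi.single i s, c)) (by simp [Pi.single_apply, apply_ite, hs])
  have hpos := hsingle r (abs_of_nonneg hr)
  have hneg := hsingle (-r) (by rw [abs_neg, abs_of_nonneg hr])
  have habs : |a i * r| ≤ θ - b * c := abs_le.2 ⟨by linarith, by linarith⟩
  rw [abs_mul, abs_of_nonneg hr] at habs
  linarith

end Halfspace

theorem natCast_div_mem_Icc {m : ℕ} (i : Fin (m + 1)) : ((i : ℕ) / (m : ℝ)) ∈ Icc (0:ℝ) 1 :=
  ⟨by positivity, div_le_one_of_le₀ (by exact_mod_cast Fin.is_le i) (Nat.cast_nonneg m)⟩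

theorem expected_grid_payoff_le {S : ℝ → Fin 2 → ℝ} {L q b θ : ℝ} {m : ℕ}
    {a : Fin (m + 1) → ℝ} (hS : ProperScoringRule S) (hlip : LipschitzScoringRule S L)
    (hq : q ∈ Icc (0:ℝ) 1) (hm : (0:ℝ) < m)
    (hH : {p : (Fin (m + 1) → ℝ) × ℝ | (∑ i, |p.1 i|) ≤ 1 / (m : ℝ) ∧ p.2 ≤ 4 * L / m ^ 2} ⊆
      {p : (Fin (m + 1) → ℝ) × ℝ | (∑ i, a i * p.1 i) + b * p.2 ≤ θ})
    (i : Fin (m + 1)) (t : ℝ) (ht : t ∈ Icc (0:ℝ) 1) (hδ : |t - (i : ℕ) / (m : ℝ)| ≤ 1 / m) :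
    (1 - t) * payoff S q (a i) b ((i : ℕ) / (m : ℝ)) 0
      + t * payoff S q (a i) b ((i : ℕ) / (m : ℝ)) 1 ≤ θ := by
  have hb := nonneg_of_subset_halfspace (by positivity) hH
  calc _ ≤ |a i| * (1 / m) + b * (2 * L * (1 / m) ^ 2) :=
        expected_payoff_le hS hlip hq hb (natCast_div_mem_Icc i) ht hδ
    _ ≤ |a i| * (1 / m) + b * (4 * L / m ^ 2) := by
      have := hlip.nonneg
      gcongr
      rw [div_pow, one_pow, mul_one_div]
      gcongr
      linarith
    _ ≤ θ := abs_mul_add_le_of_subset_halfspace (by positivity) hH i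

theorem Fin.exists_castSucc_nonpos_succ_pos {m : ℕ} (f : Fin (m + 1) → ℝ)
    (h0 : f 0 ≤ 0) (hm : 0 < f (Fin.last m)) :
    ∃ k : Fin m, f k.castSucc ≤ 0 ∧ 0 < f k.succ := by
  have hne : (univ.filter fun i => 0 < f i).Nonempty := ⟨_, mem_filter.2 ⟨mem_univ _, hm⟩⟩
  set i := (univ.filter fun i => 0 < f i).min' hne
  have hi : 0 < f i := (mem_filter.1 (min'_mem _ hne)).2
  obtain ⟨k, hk⟩ := Fin.exists_succ_eq_of_ne_zero fun h : i = 0 => by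
    rw [h] at hi; linarith
  refine ⟨k, not_lt.1 fun hlt => ?_, hk ▸ hi⟩
  have : i ≤ k.castSucc := min'_le (univ.filter fun j => 0 < f j) _ (mem_filter.2 ⟨mem_univ _, hlt⟩)
  exact Fin.castSucc_lt_succ.not_ge (hk ▸ this)

/-- The mixture equalizes the two coordinates, so both equal its `t`-weighted average. -/
theorem exists_mix_le_of_sign_change {u v u' v' t θ : ℝ}
    (hA : (1 - t) * u + t * v ≤ θ) (hB : (1 - t) * u' + t * v' ≤ θ)
    (hd : u - v ≤ 0) (hd' : 0 < u' - v') :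
    ∃ l ∈ Icc (0:ℝ) 1, l * u + (1 - l) * u' ≤ θ ∧ l * v + (1 - l) * v' ≤ θ := by
  have hD : 0 < (u' - v') - (u - v) := by linarith
  set l := (u' - v') / ((u' - v') - (u - v))
  have hl0 : 0 ≤ l := div_nonneg hd'.le hD.le
  have hl1 : l ≤ 1 := (div_le_one hD).2 (by linarith)
  have heq : l * u + (1 - l) * u' = l * v + (1 - l) * v' := by
    simp only [l]; field_simp; ring
  have havg : l * ((1 - t) * u + t * v) + (1 - l) * ((1 - t) * u' + t * v') ≤ θ := by
    linarith [mul_le_mul_of_nonneg_left hA hl0, mul_le_mul_of_nonneg_left hB (sub_nonneg.2 hl1)]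
  exact ⟨l, ⟨hl0, hl1⟩, by linear_combination havg + t * heq,
    by linear_combination havg - (1 - t) * heq⟩

theorem exists_mix_le_of_chain {m : ℕ} {u v : Fin (m + 1) → ℝ} {θ : ℝ}
    (h0 : u 0 ≤ θ) (hlast : v (Fin.last m) ≤ θ)
    (hstep : ∀ k : Fin m, ∃ t : ℝ, (1 - t) * u k.castSucc + t * v k.castSucc ≤ θ ∧
      (1 - t) * u k.succ + t * v k.succ ≤ θ) :
    ∃ i j, ∃ l ∈ Icc (0:ℝ) 1, l * u i + (1 - l) * u j ≤ θ ∧ l * v i + (1 - l) * v j ≤ θ := by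
  by_cases hd0 : 0 < u 0 - v 0
  · exact ⟨0, 0, 1, by simp, by simpa using h0, by simp; linarith⟩
  by_cases hdm : u (Fin.last m) - v (Fin.last m) ≤ 0
  · exact ⟨Fin.last m, Fin.last m, 1, by simp, by simp; linarith, by simpa using hlast⟩
  obtain ⟨k, hk, hk'⟩ :=
    Fin.exists_castSucc_nonpos_succ_pos (fun i => u i - v i) (not_lt.1 hd0) (not_le.1 hdm)
  obtain ⟨t, hA, hB⟩ := hstep k
  obtain ⟨l, hl, hu, hv⟩ := exists_mix_le_of_sign_change hA hB hk hk'
  exact ⟨_, _, l, hl, hu, hv⟩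

section Mixture

variable {ι : Type*} [DecidableEq ι] (i j : ι) {l : ℝ}

theorem mix_single_nonneg (hl : l ∈ Icc (0:ℝ) 1) (k : ι) :
    0 ≤ (l • Pi.single i 1 + (1 - l) • Pi.single j 1 : ι → ℝ) k := by
  simp only [Pi.add_apply, Pi.smul_apply, Pi.single_apply, smul_eq_mul]
  split_ifs <;> linarith [hl.1, hl.2]

theorem sum_mix_single_mul [Fintype ι] (l : ℝ) (g : ι → ℝ) :
    ∑ k, (l • Pi.single i 1 + (1 - l) • Pi.single j 1 : ι → ℝ) k * g k
      = l * g i + (1 - l) * g j := by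
  simp [add_mul, sum_add_distrib, Pi.single_apply]

end Mixture

/-- Theorem 3.1 of the paper (halfspace satisfiability): every halfspace `H`
containing the target set `𝒮^m_approach` admits a mixed forecast whose expected
payoff vector lies in `H`, for every outcome `y ∈ {0,1}`. -/
theorem stmt7 (S : ℝ → Fin 2 → ℝ) (L : ℝ)
    (hproper : StrictlyProperScoringRule S) (hlip : LipschitzScoringRule S L)
    (m : ℕ) (hm : 1 ≤ m) (q : ℝ) (hq : q ∈ Set.Icc (0:ℝ) 1)
    (a : Fin (m+1) → ℝ) (b θ : ℝ)
    (hH : {p : (Fin (m+1) → ℝ) × ℝ |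
            (∑ i, |p.1 i|) ≤ 1 / (m : ℝ) ∧ p.2 ≤ 4 * L / m ^ 2} ⊆
          {p : (Fin (m+1) → ℝ) × ℝ | (∑ i, a i * p.1 i) + b * p.2 ≤ θ}) :
    ∃ w : Fin (m+1) → ℝ, (∀ i, 0 ≤ w i) ∧ (∑ i, w i = 1) ∧
      ∀ y : Fin 2,
        (∑ i : Fin (m+1), a i * w i * ((y : ℕ) - (i : ℕ) / (m : ℝ))) +
            b * ∑ i : Fin (m+1), w i * (S ((i : ℕ) / (m : ℝ)) y - S q y)
          ≤ θ := by
  have hm0 : (0:ℝ) < m := by exact_mod_cast hm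
  have hline := expected_grid_payoff_le hproper.proper hlip hq hm0 hH
  obtain ⟨i, j, l, hl, hy0, hy1⟩ := exists_mix_le_of_chain
    (u := fun i => payoff S q (a i) b ((i : ℕ) / (m : ℝ)) 0)
    (v := fun i => payoff S q (a i) b ((i : ℕ) / (m : ℝ)) 1)
    (by simpa using hline 0 0 (by simp) (by simp))
    (by simpa using hline (Fin.last m) 1 (by simp) (by simp [hm0.ne']))
    (fun k => ⟨(k : ℕ) / (m : ℝ), hline k.castSucc _ (natCast_div_mem_Icc k.castSucc) (by simp),
      hline k.succ _ (natCast_div_mem_Icc k.castSucc) (by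
        rw [Fin.val_succ, Nat.cast_succ, ← sub_div, abs_div]; simp [abs_of_pos hm0])⟩)
  refine ⟨l • Pi.single i 1 + (1 - l) • Pi.single j 1, mix_single_nonneg i j hl,
    by simpa using sum_mix_single_mul i j l 1, fun y => ?_⟩
  rw [sum_mul_add_mul_sum_eq_sum_payoff, sum_mix_single_mul]
  fin_cases y
  exacts [hy0, hy1]
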